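/- For every natural number k and every rational number λ ≠ 1, P_k((1+λ)/(1−λ)) · (λ−1)^k = (−1)^k · Σ_{j=0}^{k} C(k,j)² λ^j, where P_k is the k-th Legendre polynomial. -/

import Mathlib

open Finset Polynomial

/-- The `k`-th Legendre polynomial over `ℚ`, via the Rodrigues formula
`P_k(x) = (1/(2^k k!)) (d/dx)^k (x²−1)^k`. -/
noncomputable def legendreP (k : ℕ) : Polynomial ℚ :=
  Polynomial.C (1 / (2 ^ k * k.factorial : ℚ)) *
    (Polynomial.derivative^[k] ((Polynomial.X ^ 2 - 1) ^ k))

/-!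
Writing `X² − 1 = (X − 1)(X + 1)` and applying the Leibniz rule to the Rodrigues formula gives
`2^k P_k(x) = ∑ C(k,j)² (x − 1)^j (x + 1)^(k−j)`. This sum is homogeneous of degree `k` in
`(x − 1, x + 1)`, and at `x = (1 + λ)/(1 − λ)` multiplying both by `1 − λ` turns them into
`(2λ, 2)`, so `2^k P_k(x) (1 − λ)^k = 2^k ∑ C(k,j)² λ^j`.
-/

open Nat in
theorem Nat.descFactorial_sub_mul_descFactorial {n j : ℕ} (h : j ≤ n) :
    n.descFactorial (n - j) * n.descFactorial j = n ! * n.choose j := by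
  rw [descFactorial_eq_factorial_mul_choose, descFactorial_eq_factorial_mul_choose,
    choose_symm h, ← choose_mul_factorial_mul_factorial h]
  ring

open Nat in
theorem Polynomial.iterate_derivative_X_sub_C_pow_mul_X_sub_C_pow {R : Type*} [CommRing R]
    (n : ℕ) (a b : R) :
    derivative^[n] ((X - C a) ^ n * (X - C b) ^ n) =
      ∑ j ∈ range (n + 1),
        ((n ! * n.choose j ^ 2 : ℕ) : R[X]) * (X - C a) ^ j * (X - C b) ^ (n - j) := by
  rw [iterate_derivative_mul]
  refine sum_congr rfl fun j hj => ?_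
  have hj : j ≤ n := Nat.lt_succ_iff.mp (mem_range.mp hj)
  rw [iterate_derivative_X_sub_pow, iterate_derivative_X_sub_pow, Nat.sub_sub_self hj,
    nsmul_eq_mul, nsmul_eq_mul, nsmul_eq_mul, sq, ← Nat.mul_assoc,
    ← Nat.descFactorial_sub_mul_descFactorial hj]
  push_cast
  ring

theorem two_pow_mul_eval_legendreP (k : ℕ) (x : ℚ) :
    2 ^ k * (legendreP k).eval x =
      ∑ j ∈ range (k + 1), (k.choose j : ℚ) ^ 2 * (x - 1) ^ j * (x + 1) ^ (k - j) := by
  have hsplit : (X ^ 2 - 1 : ℚ[X]) = (X - C 1) * (X - C (-1)) := by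
    simp only [map_neg, map_one]; ring
  rw [legendreP, hsplit, mul_pow, iterate_derivative_X_sub_C_pow_mul_X_sub_C_pow, eval_mul,
    eval_C, eval_finsetSum, mul_sum, mul_sum]
  refine sum_congr rfl fun j _ => ?_
  simp only [eval_mul, eval_pow, eval_sub, eval_X, eval_C, eval_natCast]
  push_cast
  field_simp
  ring

theorem sum_mul_pow_mul_pow_sub_mul_pow {R : Type*} [CommSemiring R] (c : ℕ → R) (k : ℕ)
    (a b t : R) :
    (∑ j ∈ range (k + 1), c j * a ^ j * b ^ (k - j)) * t ^ k =
      ∑ j ∈ range (k + 1), c j * (a * t) ^ j * (b * t) ^ (k - j) := by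
  rw [sum_mul]
  refine sum_congr rfl fun j hj => ?_
  rw [mul_pow, mul_pow, ← pow_mul_pow_sub t (Nat.lt_succ_iff.mp (mem_range.mp hj))]
  ring

theorem stmt17 (k : ℕ) (lam : ℚ) (hlam : lam ≠ 1) :
    (legendreP k).eval ((1 + lam) / (1 - lam)) * (lam - 1) ^ k
      = (-1) ^ k * ∑ j ∈ range (k + 1), (Nat.choose k j : ℚ) ^ 2 * lam ^ j := by
  have hne : 1 - lam ≠ 0 := sub_ne_zero.mpr hlam.symm
  set x := (1 + lam) / (1 - lam) with hx
  have hx₁ : (x - 1) * (1 - lam) = 2 * lam := by rw [hx]; field_simp; ring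
  have hx₂ : (x + 1) * (1 - lam) = 2 := by rw [hx]; field_simp; ring
  have key : 2 ^ k * ((legendreP k).eval x * (1 - lam) ^ k) =
      2 ^ k * ∑ j ∈ range (k + 1), (k.choose j : ℚ) ^ 2 * lam ^ j := by
    rw [← mul_assoc, two_pow_mul_eval_legendreP, sum_mul_pow_mul_pow_sub_mul_pow, hx₁, hx₂,
      mul_sum]
    refine sum_congr rfl fun j hj => ?_
    rw [← pow_mul_pow_sub (2 : ℚ) (Nat.lt_succ_iff.mp (mem_range.mp hj))]
    ring
  have hsign : (lam - 1) ^ k = (-1) ^ k * (1 - lam) ^ k := by rw [← mul_pow]; ring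
  rw [hsign, mul_left_comm, mul_left_cancel₀ (pow_ne_zero k two_ne_zero) key]
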